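/- Let R be a ring, M a left R-module, and N a submodule of M. If M is Σ-semi-compact, then N is Σ-semi-compact. -/

import Mathlib

/-!
A Σ-semi-compact module `M` has no strictly descending chain `M[J 0] ⊋ M[J 1] ⊋ ⋯` of annihilator
subgroups along an increasing chain of left ideals: given `m n ∈ M[J n] \ M[J (n + 1)]`, the
partial sums `∑_{k < a} m k e_k` of `M^(ℕ)` form a finitely solvable family of congruences
modulo `M[J a]`, and any solution, having finite support, yields a contradiction at a coordinate
outside that support. This chain condition passes to submodules and to direct sums, and it implies
semi-compactness: it forces the annihilator of some finite subfamily of a system of congruences to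
be contained in that of every member, so a solution of that finite subfamily solves the system.
-/

/-- A left `R`-module `M` is *semi-compact* if every finitely solvable family of congruences
`x ≡ x α (mod M[I α])` (`x α ∈ M`, `I α` a left ideal of `R`), i.e. a family such that every
finite subfamily has a common solution, has a simultaneous solution in `M`.
Here `y ≡ x α (mod M[I α])` is expressed as `∀ r ∈ I α, r • y = r • x α`. -/
def IsSemiCompact (R : Type*) [Ring R] (M : Type*) [AddCommGroup M] [Module R M] : Prop :=
  ∀ (Λ : Type*) (x : Λ → M) (I : Λ → Ideal R),
    (∀ s : Finset Λ, ∃ y : M, ∀ α ∈ s, ∀ r ∈ I α, r • y = r • x α) →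
    ∃ y : M, ∀ (α : Λ), ∀ r ∈ I α, r • y = r • x α

/-- `M` is *Σ-semi-compact* if every direct sum of copies of `M` (here realized as
`ι →₀ M` for an arbitrary index type `ι`) is semi-compact. -/
def IsSigmaSemiCompact.{s, u, v, w} (R : Type u) [Ring R] (M : Type v)
    [AddCommGroup M] [Module R M] : Prop :=
  ∀ ι : Type w, IsSemiCompact.{u, max v w, s} R (ι →₀ M)

universe s u v w

section Annihilated

variable {R : Type u} [Ring R] (M : Type v) [AddCommGroup M] [Module R M]

/-- The subgroup `M[I]`; it is not a submodule unless `I` is two-sided. -/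
def annihilatedBy (I : Ideal R) : AddSubgroup M where
  carrier := {x | ∀ r ∈ I, r • x = 0}
  add_mem' hx hy r hr := by rw [smul_add, hx r hr, hy r hr, add_zero]
  zero_mem' r _ := smul_zero r
  neg_mem' hx r hr := by rw [smul_neg, hx r hr, neg_zero]

variable {M}

theorem mem_annihilatedBy {I : Ideal R} {x : M} :
    x ∈ annihilatedBy M I ↔ ∀ r ∈ I, r • x = 0 :=
  Iff.rfl

theorem mem_annihilatedBy_iff_le_ker {I : Ideal R} {x : M} :
    x ∈ annihilatedBy M I ↔ I ≤ LinearMap.ker (LinearMap.toSpanSingleton R M x) :=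
  Iff.rfl

theorem sub_mem_annihilatedBy_iff {I : Ideal R} {x y : M} :
    y - x ∈ annihilatedBy M I ↔ ∀ r ∈ I, r • y = r • x := by
  simp only [mem_annihilatedBy, smul_sub, sub_eq_zero]

theorem mem_annihilatedBy_finsetSup {Λ : Type*} {t : Finset Λ} {I : Λ → Ideal R} {x : M} :
    x ∈ annihilatedBy M (t.sup I) ↔ ∀ α ∈ t, x ∈ annihilatedBy M (I α) := by
  simp only [mem_annihilatedBy_iff_le_ker, Finset.sup_le_iff]

theorem annihilatedBy_anti {I J : Ideal R} (h : I ≤ J) : annihilatedBy M J ≤ annihilatedBy M I :=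
  fun _ hx r hr => hx r (h hr)

end Annihilated

/-- Since `M[J (n + 1)] ≤ M[J n]` anyway, this says that the chain `M[J n]` is not strictly
descending. -/
def AnnihilatorChainCondition (R : Type u) [Ring R] (M : Type v) [AddCommGroup M] [Module R M] :
    Prop :=
  ∀ J : ℕ → Ideal R, Monotone J → ∃ n, annihilatedBy M (J n) ≤ annihilatedBy M (J (n + 1))

namespace AnnihilatorChainCondition

variable {R : Type u} [Ring R] {M : Type v} [AddCommGroup M] [Module R M]

theorem of_injective {N : Type w} [AddCommGroup N] [Module R N] (hc : AnnihilatorChainCondition R M)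
    (f : N →ₗ[R] M) (hf : Function.Injective f) : AnnihilatorChainCondition R N := by
  intro J hJ
  obtain ⟨n, hn⟩ := hc J hJ
  refine ⟨n, fun x hx r hr => hf ?_⟩
  rw [map_smul, map_zero]
  exact hn (fun r hr => by rw [← map_smul, hx r hr, map_zero]) r hr

theorem pi (hc : AnnihilatorChainCondition R M) (ι : Type w) :
    AnnihilatorChainCondition R (ι → M) := by
  intro J hJ
  obtain ⟨n, hn⟩ := hc J hJ
  exact ⟨n, fun x hx r hr => funext fun i => hn (fun r hr => congrFun (hx r hr) i) r hr⟩

theorem finsupp (hc : AnnihilatorChainCondition R M) (ι : Type w) :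
    AnnihilatorChainCondition R (ι →₀ M) :=
  (hc.pi ι).of_injective Finsupp.lcoeFun DFunLike.coe_injective

theorem exists_finset_annihilatedBy_sup_le (hc : AnnihilatorChainCondition R M) {Λ : Type*}
    (I : Λ → Ideal R) : ∃ t : Finset Λ, ∀ α, annihilatedBy M (t.sup I) ≤ annihilatedBy M (I α) := by
  classical
  by_contra! h
  choose next hnext using h
  let F : ℕ → Finset Λ := fun n => Nat.rec ∅ (fun _ t => insert (next t) t) n
  have hF : Monotone F := monotone_nat_of_le_succ fun n => Finset.subset_insert _ _
  obtain ⟨n, hn⟩ := hc (fun n => (F n).sup I) fun a b hab => Finset.sup_mono (hF hab)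
  exact hnext (F n) (hn.trans (annihilatedBy_anti (Finset.le_sup (Finset.mem_insert_self _ _))))

theorem isSemiCompact (hc : AnnihilatorChainCondition R M) : IsSemiCompact.{u, v, s} R M := by
  classical
  intro Λ x I hfin
  obtain ⟨t, ht⟩ := hc.exists_finset_annihilatedBy_sup_le I
  obtain ⟨y, hy⟩ := hfin t
  refine ⟨y, fun α => sub_mem_annihilatedBy_iff.1 ?_⟩
  obtain ⟨z, hz⟩ := hfin (insert α t)
  have hyz : y - z ∈ annihilatedBy M (t.sup I) := mem_annihilatedBy_finsetSup.2 fun β hβ => by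
    rw [← sub_sub_sub_cancel_right y z (x β)]
    exact sub_mem (sub_mem_annihilatedBy_iff.2 (hy β hβ))
      (sub_mem_annihilatedBy_iff.2 (hz β (Finset.mem_insert_of_mem hβ)))
  rw [← sub_add_sub_cancel y z (x α)]
  exact add_mem (ht α hyz) (sub_mem_annihilatedBy_iff.2 (hz α (Finset.mem_insert_self α t)))

theorem of_isSemiCompact_finsupp {ι : Type w} (e : ℕ ↪ ι)
    (h : IsSemiCompact.{u, max v w, s} R (ι →₀ M)) : AnnihilatorChainCondition R M := by
  classical
  intro J hJ
  by_contra! hJ'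
  choose m hm hm' using fun n => SetLike.not_le_iff_exists.1 (hJ' n)
  let x : ℕ → ι →₀ M := fun a => ∑ k ∈ Finset.range a, Finsupp.single (e k) (m k)
  have hx : ∀ a b, a ≤ b → ∀ r ∈ J a, r • x b = r • x a := by
    intro a b hab r hr
    simp only [x, Finset.smul_sum, Finsupp.smul_single]
    refine (Finset.sum_subset (Finset.range_subset_range.2 hab) fun k _ hk => ?_).symm
    rw [hm k r (hJ (not_lt.1 (Finset.mem_range.not.1 hk)) hr), Finsupp.single_zero]
  have hx_apply : ∀ n, x (n + 1) (e n) = m n := by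
    intro n
    simp only [x, Finsupp.finsetSum_apply, Finsupp.single_apply, e.injective.eq_iff,
      Finset.sum_ite_eq', Finset.self_mem_range_succ, if_true]
  obtain ⟨y, hy⟩ := h (ULift.{s} ℕ) (fun a => x a.down) (fun a => J a.down) fun t =>
    ⟨x (t.sup ULift.down), fun a ha => hx _ _ (Finset.le_sup (f := ULift.down) ha)⟩
  obtain ⟨n, hn⟩ : ∃ n, e n ∉ y.support := by
    simpa using Infinite.exists_notMem_finset (y.support.preimage e e.injective.injOn)
  refine hm' n fun r hr => ?_
  have := DFunLike.congr_fun (hy ⟨n + 1⟩ r hr) (e n)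
  rwa [Finsupp.smul_apply, Finsupp.smul_apply, Finsupp.notMem_support_iff.1 hn, smul_zero,
    hx_apply, eq_comm] at this

end AnnihilatorChainCondition

theorem IsSigmaSemiCompact.annihilatorChainCondition {R : Type u} [Ring R] {M : Type v}
    [AddCommGroup M] [Module R M] (hM : IsSigmaSemiCompact.{s, u, v, w} R M) :
    AnnihilatorChainCondition R M :=
  .of_isSemiCompact_finsupp Equiv.ulift.{w}.symm.toEmbedding (hM _)

/-- Every submodule of a Σ-semi-compact module is Σ-semi-compact. -/
theorem isSigmaSemiCompact_submodule (R : Type*) [Ring R] (M : Type*)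
    [AddCommGroup M] [Module R M] (N : Submodule R M)
    (hM : IsSigmaSemiCompact R M) : IsSigmaSemiCompact R N := fun ι =>
  have hN := hM.annihilatorChainCondition.of_injective N.subtype N.injective_subtype
  (hN.finsupp ι).isSemiCompact
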